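/- arXiv:2006.11732 — 3 statements merged into one kernel-verified Lean document; each statement's English description precedes it below -/
import Mathlib

section
/- Every odd superderivation D of the model filiform Lie superalgebra L^{n,m} satisfies D([y_i,y_j]) = [D(y_i),y_j] - [y_i,D(y_j)] = 0 for all odd basis elements y_i, y_j; i.e., the x_1-coefficient of D(y_i) is zero for every i. Consequently every odd superderivation of L^{n,m} is a derivation of L^{n,m} regarded as a Z_2-graded Lie algebra. -/
/-!
The model filiform Lie superalgebra `L^{n,m}` with even basis `x_1,…,x_n` and odd
basis `y_1,…,y_m`, with nonzero brackets `[x_1,x_i] = -[x_i,x_1] = x_{i+1}` (2 ≤ i ≤ n-1)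
and `[x_1,y_j] = -[y_j,x_1] = y_{j+1}` (1 ≤ j ≤ m-1), satisfies super anticommutativity
and the super Jacobi identity.
-/

namespace ModelFiliform

/-- Index type: even basis indices on the left, odd on the right (0-based). -/
abbrev Idx (n m : ℕ) := Fin n ⊕ Fin m

/-- Underlying vector space over ℂ. -/
abbrev V (n m : ℕ) := Idx n m →₀ ℂ

/-- `X n m k` is the basis vector `x_k` (1-based), or `0` if out of range. -/
noncomputable def X (n m k : ℕ) : V n m :=
  if h : 1 ≤ k ∧ k ≤ n then Finsupp.single (Sum.inl ⟨k - 1, by omega⟩) 1 else 0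

/-- `Y n m k` is the basis vector `y_k` (1-based), or `0` if out of range. -/
noncomputable def Y (n m k : ℕ) : V n m :=
  if h : 1 ≤ k ∧ k ≤ m then Finsupp.single (Sum.inr ⟨k - 1, by omega⟩) 1 else 0

/-- Structure constants of `L^{n,m}`. -/
noncomputable def c (n m : ℕ) : Idx n m → Idx n m → V n m
  | Sum.inl i, Sum.inl j =>
      if i.val = 0 ∧ 1 ≤ j.val then X n m (j.val + 2)
      else if j.val = 0 ∧ 1 ≤ i.val then -X n m (i.val + 2) else 0
  | Sum.inl i, Sum.inr j => if i.val = 0 then Y n m (j.val + 2) else 0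
  | Sum.inr j, Sum.inl i => if i.val = 0 then -Y n m (j.val + 2) else 0
  | Sum.inr _, Sum.inr _ => 0

/-- The bracket of `L^{n,m}`, as a bilinear map. -/
noncomputable def brL (n m : ℕ) : V n m →ₗ[ℂ] V n m →ₗ[ℂ] V n m :=
  Finsupp.lsum ℂ (fun a =>
    LinearMap.toSpanSingleton ℂ (V n m →ₗ[ℂ] V n m)
      (Finsupp.lsum ℂ (fun b => LinearMap.toSpanSingleton ℂ (V n m) (c n m a b))))

/-- The bracket. -/
noncomputable def br (n m : ℕ) (u v : V n m) : V n m := brL n m u v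

/-- Parity of the basis indices. -/
def par (n m : ℕ) : Idx n m → ZMod 2 := Sum.elim (fun _ => 0) (fun _ => 1)

/-- `u` is homogeneous of degree `s`. -/
def IsHomog (n m : ℕ) (u : V n m) (s : ZMod 2) : Prop :=
  ∀ a ∈ u.support, par n m a = s

/-!
Odd vectors bracket nontrivially only with `x_1`, and `[y_i, y_j] = 0`. Writing `a_i` for the
`x_1`-coefficient of `D y_i`, the super Leibniz rule applied to `[y_i, y_j]` therefore reads
`a_i y_{j+1} + a_j y_{i+1} = 0`. Taking `i = j = 1` gives `a_1 = 0`, and then `j = 1` gives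
`a_i = 0`. Since `D` also maps even vectors to odd ones, no `D v` has an `x_1`-component, so
`[u, D v] = 0` for odd `u` and the sign in the super Leibniz rule is irrelevant.
-/

section

variable {n m : ℕ}

lemma br_add_left (u u' v : V n m) : br n m (u + u') v = br n m u v + br n m u' v := by
  simp only [br, map_add, LinearMap.add_apply]

lemma br_add_right (u v v' : V n m) : br n m u (v + v') = br n m u v + br n m u v' := by
  simp only [br, map_add]

lemma br_single_single (a b : Idx n m) (r s : ℂ) :
    br n m (Finsupp.single a r) (Finsupp.single b s) = (r * s) • c n m a b := by
  simp [br, brL, mul_smul]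

lemma br_single_inr_left (hn : 1 ≤ n) (a : Fin m) (r : ℂ) (v : V n m) :
    br n m (Finsupp.single (Sum.inr a) r) v =
      -(r * v (Sum.inl ⟨0, hn⟩)) • Y n m (a.val + 2) := by
  induction v using Finsupp.induction_linear with
  | zero => simp [br]
  | add v v' hv hv' => rw [br_add_right, hv, hv', Finsupp.add_apply, mul_add, neg_add, add_smul]
  | single b s =>
    rw [br_single_single]
    rcases b with i | i
    · by_cases hi : i.val = 0 <;> simp [c, Finsupp.single_apply, Fin.ext_iff, hi]
    · simp [c]

lemma br_single_inr_right (hn : 1 ≤ n) (u : V n m) (b : Fin m) (s : ℂ) :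
    br n m u (Finsupp.single (Sum.inr b) s) =
      (u (Sum.inl ⟨0, hn⟩) * s) • Y n m (b.val + 2) := by
  induction u using Finsupp.induction_linear with
  | zero => simp [br]
  | add u u' hu hu' => rw [br_add_left, hu, hu', Finsupp.add_apply, add_mul, add_smul]
  | single a r =>
    rw [br_single_single]
    rcases a with i | i
    · simp [c, Finsupp.single_apply, Fin.ext_iff]
    · simp [c]

lemma Y_succ (i : Fin m) : Y n m (i.val + 1) = Finsupp.single (Sum.inr i) 1 := by
  rw [Y, dif_pos ⟨by omega, by omega⟩]
  rfl

lemma Y_ne_zero {k : ℕ} (hk : 1 ≤ k) (hkm : k ≤ m) : Y n m k ≠ 0 := by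
  rw [Y, dif_pos ⟨hk, hkm⟩]
  exact Finsupp.single_ne_zero.2 one_ne_zero

lemma br_Y_Y (i j : Fin m) : br n m (Y n m (i.val + 1)) (Y n m (j.val + 1)) = 0 := by
  rw [Y_succ, Y_succ, br_single_single]
  simp [c]

lemma isHomog_single_inl (i : Fin n) (r : ℂ) :
    IsHomog n m (Finsupp.single (Sum.inl i) r) 0 := by
  intro a ha
  rw [Finset.mem_singleton.1 (Finsupp.support_single_subset ha)]
  rfl

lemma isHomog_single_inr (i : Fin m) (r : ℂ) :
    IsHomog n m (Finsupp.single (Sum.inr i) r) 1 := by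
  intro a ha
  rw [Finset.mem_singleton.1 (Finsupp.support_single_subset ha)]
  rfl

lemma IsHomog.apply_inl_eq_zero {u : V n m} (hu : IsHomog n m u 1) (i : Fin n) :
    u (Sum.inl i) = 0 := by
  by_contra h
  exact zero_ne_one (hu _ (Finsupp.mem_support_iff.2 h))

end

structure IsOddSuperderivation (n m : ℕ) (D : Module.End ℂ (V n m)) : Prop where
  isHomog_add_one : ∀ (u : V n m) (s : ZMod 2), IsHomog n m u s → IsHomog n m (D u) (s + 1)
  super_leibniz : ∀ (u v : V n m) (su : ZMod 2), IsHomog n m u su →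
    D (br n m u v) = br n m (D u) v + ((-1 : ℂ) ^ su.val) • br n m u (D v)

namespace IsOddSuperderivation

variable {n m : ℕ} {D : Module.End ℂ (V n m)}

lemma leibniz_of_isHomog_zero (hD : IsOddSuperderivation n m D) {u : V n m}
    (hu : IsHomog n m u 0) (v : V n m) : D (br n m u v) = br n m (D u) v + br n m u (D v) := by
  rw [hD.super_leibniz u v 0 hu, ZMod.val_zero, pow_zero, one_smul]

lemma leibniz_of_isHomog_one (hD : IsOddSuperderivation n m D) {u : V n m}
    (hu : IsHomog n m u 1) (v : V n m) : D (br n m u v) = br n m (D u) v - br n m u (D v) := by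
  rw [hD.super_leibniz u v 1 hu, ZMod.val_one, pow_one, neg_one_smul, sub_eq_add_neg]

lemma br_map_Y_sub_br_Y_map (hD : IsOddSuperderivation n m D) (i j : Fin m) :
    br n m (D (Y n m (i.val + 1))) (Y n m (j.val + 1)) -
      br n m (Y n m (i.val + 1)) (D (Y n m (j.val + 1))) = 0 := by
  rw [← hD.leibniz_of_isHomog_one (Y_succ i ▸ isHomog_single_inr i 1), br_Y_Y, map_zero]

lemma apply_Y_inl_smul_add (hD : IsOddSuperderivation n m D) (hn : 1 ≤ n) (i j : Fin m) :
    (D (Y n m (i.val + 1))) (Sum.inl ⟨0, hn⟩) • Y n m (j.val + 2) +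
      (D (Y n m (j.val + 1))) (Sum.inl ⟨0, hn⟩) • Y n m (i.val + 2) = 0 := by
  have h := hD.br_map_Y_sub_br_Y_map i j
  rw [Y_succ i, Y_succ j] at h ⊢
  rw [br_single_inr_right hn, br_single_inr_left hn] at h
  linear_combination (norm := module) h

lemma apply_Y_inl_eq_zero (hD : IsOddSuperderivation n m D) (hn : 1 ≤ n) (hm : 2 ≤ m)
    (i : Fin m) : (D (Y n m (i.val + 1))) (Sum.inl ⟨0, hn⟩) = 0 := by
  have hY : Y n m 2 ≠ 0 := Y_ne_zero (by norm_num) hm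
  let i₀ : Fin m := ⟨0, by omega⟩
  have h₀ : (D (Y n m (i₀.val + 1))) (Sum.inl ⟨0, hn⟩) = 0 := by
    have h := hD.apply_Y_inl_smul_add hn i₀ i₀
    rw [← add_smul] at h
    exact add_self_eq_zero.1 ((smul_eq_zero.1 h).resolve_right hY)
  have h := hD.apply_Y_inl_smul_add hn i i₀
  rw [h₀, zero_smul, add_zero] at h
  exact (smul_eq_zero.1 h).resolve_right hY

lemma apply_inl_eq_zero (hD : IsOddSuperderivation n m D) (hn : 1 ≤ n) (hm : 2 ≤ m)
    (v : V n m) : (D v) (Sum.inl ⟨0, hn⟩) = 0 := by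
  induction v using Finsupp.induction_linear with
  | zero => simp
  | add v v' hv hv' => rw [map_add, Finsupp.add_apply, hv, hv', add_zero]
  | single a r =>
    rcases a with i | i
    · have h := hD.isHomog_add_one _ 0 (isHomog_single_inl i r)
      rw [zero_add] at h
      exact h.apply_inl_eq_zero _
    · rw [← Finsupp.smul_single_one, ← Y_succ, map_smul, Finsupp.smul_apply,
        hD.apply_Y_inl_eq_zero hn hm, smul_zero]

lemma leibniz (hD : IsOddSuperderivation n m D) (hn : 1 ≤ n) (hm : 2 ≤ m) (u v : V n m) :
    D (br n m u v) = br n m (D u) v + br n m u (D v) := by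
  induction u using Finsupp.induction_linear with
  | zero => simp [br]
  | add u u' hu hu' =>
    rw [br_add_left, map_add, hu, hu', map_add, br_add_left, br_add_left]
    abel
  | single a r =>
    rcases a with i | i
    · exact hD.leibniz_of_isHomog_zero (isHomog_single_inl i r) v
    · rw [hD.leibniz_of_isHomog_one (isHomog_single_inr i r) v, br_single_inr_left hn,
        hD.apply_inl_eq_zero hn hm, mul_zero, neg_zero, zero_smul, sub_zero, add_zero]

end IsOddSuperderivation

/-- Every odd superderivation of `L^{n,m}` kills the odd–odd superderivation identity:
`[D(y_i),y_j] - [y_i,D(y_j)] = 0`, the `x_1`-coefficient of every `D(y_i)` vanishes, and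
consequently `D` is a derivation of `L^{n,m}` regarded as a ℤ₂-graded Lie algebra. -/
theorem oddSuperderivation_modelFiliform (n m : ℕ) (hn : 1 ≤ n) (hm : 2 ≤ m)
    (D : Module.End ℂ (V n m))
    (hpar : ∀ (u : V n m) (s : ZMod 2), IsHomog n m u s → IsHomog n m (D u) (s + 1))
    (hder : ∀ (u v : V n m) (su : ZMod 2), IsHomog n m u su →
      D (br n m u v) = br n m (D u) v + ((-1 : ℂ) ^ su.val) • br n m u (D v)) :
    (∀ i j : Fin m,
      br n m (D (Y n m (i.val + 1))) (Y n m (j.val + 1)) -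
        br n m (Y n m (i.val + 1)) (D (Y n m (j.val + 1))) = 0) ∧
    (∀ i : Fin m, (D (Y n m (i.val + 1))) (Sum.inl ⟨0, hn⟩) = 0) ∧
    (∀ u v : V n m, D (br n m u v) = br n m (D u) v + br n m u (D v)) := by
  have hD : IsOddSuperderivation n m D := ⟨hpar, hder⟩
  exact ⟨hD.br_map_Y_sub_br_Y_map, hD.apply_Y_inl_eq_zero hn hm, hD.leibniz hn hm⟩

end ModelFiliform
end

section
/- For an odd superderivation D of L^{n,m}: if i ≥ 2, then D(y_i) = [x_1, D(y_{i-1})], and hence D(y_i) lies in the span of {x_3,...,x_n}; in particular the coefficient of x_1 in D(y_i) vanishes for all i ≥ 2. -/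
/-!
The model filiform Lie superalgebra `L^{n,m}` with even basis `x_1,…,x_n` and odd
basis `y_1,…,y_m`, with nonzero brackets `[x_1,x_i] = -[x_i,x_1] = x_{i+1}` (2 ≤ i ≤ n-1)
and `[x_1,y_j] = -[y_j,x_1] = y_{j+1}` (1 ≤ j ≤ m-1), satisfies super anticommutativity
and the super Jacobi identity.
-/

namespace ModelFiliform

/-!
Since `y_i = [x_1, y_{i-1}]` and `x_1` is even, the super Leibniz rule gives
`D(y_i) = [D(x_1), y_{i-1}] + [x_1, D(y_{i-1})]`. The first term is a bracket of two odd
elements, which vanishes in `L^{n,m}`. As `D(y_{i-1})` is even, it is a combination of the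
`x_j`, and `[x_1, x_j]` is `x_{j+1}` or `0`, so `[x_1, D(y_{i-1})]` lies in the span of
`x_3, …, x_n`, all of whose elements have zero `x_1`-coefficient.
-/

variable {n m : ℕ}

lemma br_single_left (a : Idx n m) (v : V n m) :
    br n m (Finsupp.single a 1) v = v.sum fun b s => s • c n m a b := by
  rw [br, brL, Finsupp.lsum_single, LinearMap.toSpanSingleton_apply, one_smul,
    Finsupp.lsum_apply]
  rfl

lemma br_eq_sum (u v : V n m) :
    br n m u v = u.sum fun a r => v.sum fun b s => (r * s) • c n m a b := by
  rw [br, brL, Finsupp.lsum_apply, Finsupp.sum, Finsupp.sum, LinearMap.sum_apply]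
  refine Finset.sum_congr rfl fun a _ => ?_
  rw [LinearMap.toSpanSingleton_apply, LinearMap.smul_apply, Finsupp.lsum_apply,
    Finsupp.sum, Finsupp.sum, Finset.smul_sum]
  refine Finset.sum_congr rfl fun b _ => ?_
  simp [smul_smul]

lemma X_one_eq_single (hn : 1 ≤ n) : X n m 1 = Finsupp.single (Sum.inl ⟨0, hn⟩) 1 := by
  rw [X, dif_pos ⟨le_rfl, hn⟩]

lemma isHomog_X (k : ℕ) : IsHomog n m (X n m k) 0 := by
  intro a ha
  rw [X] at ha
  split at ha
  · rw [Finset.mem_singleton.mp (Finsupp.support_single_subset ha)]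
    rfl
  · simp at ha

lemma isHomog_Y (k : ℕ) : IsHomog n m (Y n m k) 1 := by
  intro a ha
  rw [Y] at ha
  split at ha
  · rw [Finset.mem_singleton.mp (Finsupp.support_single_subset ha)]
    rfl
  · simp at ha

lemma exists_eq_inl_of_isHomog_zero {v : V n m} (hv : IsHomog n m v 0) {a : Idx n m}
    (ha : a ∈ v.support) : ∃ j, a = Sum.inl j := by
  cases a with
  | inl j => exact ⟨j, rfl⟩
  | inr j => exact absurd (hv _ ha) (by simp [par])

lemma exists_eq_inr_of_isHomog_one {v : V n m} (hv : IsHomog n m v 1) {a : Idx n m}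
    (ha : a ∈ v.support) : ∃ j, a = Sum.inr j := by
  cases a with
  | inl j => exact absurd (hv _ ha) (by simp [par])
  | inr j => exact ⟨j, rfl⟩

lemma br_eq_zero_of_isHomog_one {u v : V n m} (hu : IsHomog n m u 1) (hv : IsHomog n m v 1) :
    br n m u v = 0 := by
  rw [br_eq_sum]
  refine Finset.sum_eq_zero fun a ha => Finset.sum_eq_zero fun b hb => ?_
  obtain ⟨i, rfl⟩ := exists_eq_inr_of_isHomog_one hu ha
  obtain ⟨j, rfl⟩ := exists_eq_inr_of_isHomog_one hv hb
  simp [c]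

lemma br_X_one_Y (hn : 1 ≤ n) {k : ℕ} (hk : 1 ≤ k) :
    br n m (X n m 1) (Y n m k) = Y n m (k + 1) := by
  rw [X_one_eq_single hn]
  by_cases hkm : k ≤ m
  · rw [Y, dif_pos ⟨hk, hkm⟩, br_single_left, Finsupp.sum_single_index (by simp), one_smul, c,
      if_pos rfl]
    congr 1
    simp only
    omega
  · rw [Y, Y, dif_neg (by omega), dif_neg (by omega)]
    exact (brL n m _).map_zero

lemma c_inl_zero_inl (hn : 1 ≤ n) (j : Fin n) :
    c n m (Sum.inl ⟨0, hn⟩) (Sum.inl j) = if 1 ≤ j.val then X n m (j.val + 2) else 0 := by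
  by_cases hj : 1 ≤ j.val
  · rw [c, if_pos ⟨rfl, hj⟩, if_pos hj]
  · rw [c, if_neg (fun h => hj h.2), if_neg (fun h => absurd h.2 (by simp)), if_neg hj]

noncomputable def spanXFromThree (n m : ℕ) : Submodule ℂ (V n m) :=
  Submodule.span ℂ {v : V n m | ∃ s : ℕ, 3 ≤ s ∧ s ≤ n ∧ v = X n m s}

lemma X_mem_spanXFromThree {k : ℕ} (hk : 3 ≤ k) :
    X n m k ∈ spanXFromThree n m := by
  by_cases hkn : k ≤ n
  · exact Submodule.subset_span ⟨k, hk, hkn, rfl⟩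
  · rw [X, dif_neg (by omega)]
    exact Submodule.zero_mem _

lemma br_X_one_mem_spanXFromThree (hn : 1 ≤ n) {v : V n m} (hv : IsHomog n m v 0) :
    br n m (X n m 1) v ∈ spanXFromThree n m := by
  rw [X_one_eq_single hn, br_single_left]
  refine Submodule.sum_mem _ fun b hb => Submodule.smul_mem _ _ ?_
  obtain ⟨j, rfl⟩ := exists_eq_inl_of_isHomog_zero hv hb
  rw [c_inl_zero_inl hn]
  split_ifs with hj
  · exact X_mem_spanXFromThree (by omega)
  · exact Submodule.zero_mem _

lemma apply_inl_zero_eq_zero_of_mem_spanXFromThree (hn : 1 ≤ n) {v : V n m}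
    (hv : v ∈ spanXFromThree n m) :
    v (Sum.inl ⟨0, hn⟩) = 0 := by
  suffices h : spanXFromThree n m ≤ LinearMap.ker (Finsupp.lapply (Sum.inl ⟨0, hn⟩)) from h hv
  rw [spanXFromThree, Submodule.span_le]
  rintro _ ⟨s, hs, hsn, rfl⟩
  rw [SetLike.mem_coe, LinearMap.mem_ker, Finsupp.lapply_apply, X, dif_pos ⟨by omega, hsn⟩,
    Finsupp.single_apply, if_neg]
  rw [Sum.inl.injEq, Fin.mk.injEq]
  omega

lemma oddSuperderivation_Y_succ (hn : 1 ≤ n) (D : Module.End ℂ (V n m))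
    (hpar : ∀ (u : V n m) (s : ZMod 2), IsHomog n m u s → IsHomog n m (D u) (s + 1))
    (hder : ∀ (u v : V n m) (su : ZMod 2), IsHomog n m u su →
      D (br n m u v) = br n m (D u) v + ((-1 : ℂ) ^ su.val) • br n m u (D v))
    {k : ℕ} (hk : 1 ≤ k) :
    D (Y n m (k + 1)) = br n m (X n m 1) (D (Y n m k)) := by
  have hDX : IsHomog n m (D (X n m 1)) 1 := by simpa using hpar _ 0 (isHomog_X 1)
  rw [← br_X_one_Y hn hk, hder _ _ 0 (isHomog_X 1),
    br_eq_zero_of_isHomog_one hDX (isHomog_Y k), zero_add, ZMod.val_zero, pow_zero, one_smul]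

/-- For an odd superderivation `D` of `L^{n,m}` and `i ≥ 2` one has
`D(y_i) = [x_1, D(y_{i-1})]`, so `D(y_i)` lies in the span of `x_3,…,x_n`; in particular the
coefficient of `x_1` in `D(y_i)` vanishes for `i ≥ 2`. -/
theorem oddSuperderivation_on_y (n m : ℕ) (hn : 1 ≤ n)
    (D : Module.End ℂ (V n m))
    (hpar : ∀ (u : V n m) (s : ZMod 2), IsHomog n m u s → IsHomog n m (D u) (s + 1))
    (hder : ∀ (u v : V n m) (su : ZMod 2), IsHomog n m u su →
      D (br n m u v) = br n m (D u) v + ((-1 : ℂ) ^ su.val) • br n m u (D v)) :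
    ∀ i : ℕ, 2 ≤ i → i ≤ m →
      D (Y n m i) = br n m (X n m 1) (D (Y n m (i - 1))) ∧
      D (Y n m i) ∈ Submodule.span ℂ {v | ∃ s : ℕ, 3 ≤ s ∧ s ≤ n ∧ v = X n m s} ∧
      (D (Y n m i)) (Sum.inl ⟨0, hn⟩) = 0 := by
  intro i hi _
  obtain ⟨k, rfl⟩ : ∃ k, i = k + 1 := ⟨i - 1, by omega⟩
  have hDY : IsHomog n m (D (Y n m k)) 0 := by
    simpa [show (1 + 1 : ZMod 2) = 0 from rfl] using hpar _ 1 (isHomog_Y k)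
  have hrec := oddSuperderivation_Y_succ hn D hpar hder (k := k) (by omega)
  have hspan := hrec ▸ br_X_one_mem_spanXFromThree hn hDY
  exact ⟨by simpa using hrec, hspan, apply_inl_zero_eq_zero_of_mem_spanXFromThree hn hspan⟩

end ModelFiliform
end

section
/- Every odd superderivation D of the model nilpotent Lie superalgebra N(n_1,...,n_k,1 | m_1,...,m_p) satisfies: for each odd generator index i ∈ {1, m_1+1, m_1+m_2+1, ..., m_1+...+m_{p-1}+1}, the coefficient of x_1 in D(y_i) is zero (this follows from 0 = D([y_i,y_i]) = [D(y_i),y_i] - [y_i,D(y_i)] = 2α_1 y_{i+1}); for non-generator indices i, D(y_i) = [x_1, D(y_{i-1})] lies in the span of non-generator even basis vectors. Consequently, every odd superderivation of N is a derivation of N regarded as a Z_2-graded Lie algebra. -/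
namespace ModelNilpotent

open Classical

/-- Partial sums: `P f j = f 0 + … + f (j-1)`. -/
abbrev P (f : ℕ → ℕ) (j : ℕ) : ℕ := ∑ t ∈ Finset.range j, f t

/-- Number of even basis vectors: `n_1 + … + n_k + 1`. -/
abbrev NN (k : ℕ) (nn : ℕ → ℕ) : ℕ := P nn k + 1

/-- Number of odd basis vectors: `m_1 + … + m_p`. -/
abbrev MM (p : ℕ) (mm : ℕ → ℕ) : ℕ := P mm p

/-- Index type of `N(n_1,…,n_k,1 | m_1,…,m_p)`. -/
abbrev Idx (k p : ℕ) (nn mm : ℕ → ℕ) := Fin (NN k nn) ⊕ Fin (MM p mm)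

/-- Underlying vector space over ℂ. -/
abbrev V (k p : ℕ) (nn mm : ℕ → ℕ) := Idx k p nn mm →₀ ℂ

/-- `X … s` is the even basis vector `x_s` (1-based), or `0` if out of range. -/
noncomputable def X (k p : ℕ) (nn mm : ℕ → ℕ) (s : ℕ) : V k p nn mm :=
  if h : 1 ≤ s ∧ s ≤ NN k nn then Finsupp.single (Sum.inl ⟨s - 1, by omega⟩) 1 else 0

/-- `Y … s` is the odd basis vector `y_s` (1-based), or `0` if out of range. -/
noncomputable def Y (k p : ℕ) (nn mm : ℕ → ℕ) (s : ℕ) : V k p nn mm :=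
  if h : 1 ≤ s ∧ s ≤ MM p mm then Finsupp.single (Sum.inr ⟨s - 1, by omega⟩) 1 else 0

/-- `[x_1, x_s] = x_{s+1}` holds exactly for `s` in one of the even blocks:
`s ∈ {2,…,n_1} ∪ ⋃_j {n_1+…+n_j+2, …, n_1+…+n_{j+1}}`. -/
def EvOK (k : ℕ) (nn : ℕ → ℕ) (s : ℕ) : Prop :=
  ∃ j < k, P nn j + 2 ≤ s ∧ s ≤ P nn (j + 1)

/-- `[x_1, y_s] = y_{s+1}` holds exactly for `s` in one of the odd blocks minus its last
element: `s ∈ ⋃_j {m_1+…+m_j+1, …, m_1+…+m_{j+1}-1}`. -/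
def OdOK (p : ℕ) (mm : ℕ → ℕ) (s : ℕ) : Prop :=
  ∃ j < p, P mm j + 1 ≤ s ∧ s + 1 ≤ P mm (j + 1)

/-- Structure constants of `N(n_1,…,n_k,1 | m_1,…,m_p)`. -/
noncomputable def c (k p : ℕ) (nn mm : ℕ → ℕ) :
    Idx k p nn mm → Idx k p nn mm → V k p nn mm
  | Sum.inl i, Sum.inl j =>
      if i.val = 0 ∧ EvOK k nn (j.val + 1) then X k p nn mm (j.val + 2)
      else if j.val = 0 ∧ EvOK k nn (i.val + 1) then -X k p nn mm (i.val + 2) else 0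
  | Sum.inl i, Sum.inr j =>
      if i.val = 0 ∧ OdOK p mm (j.val + 1) then Y k p nn mm (j.val + 2) else 0
  | Sum.inr j, Sum.inl i =>
      if i.val = 0 ∧ OdOK p mm (j.val + 1) then -Y k p nn mm (j.val + 2) else 0
  | Sum.inr _, Sum.inr _ => 0

/-- The bracket, as a bilinear map. -/
noncomputable def br (k p : ℕ) (nn mm : ℕ → ℕ) (u v : V k p nn mm) : V k p nn mm :=
  Finsupp.lsum ℂ (fun a =>
    LinearMap.toSpanSingleton ℂ (V k p nn mm →ₗ[ℂ] V k p nn mm)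
      (Finsupp.lsum ℂ (fun b =>
        LinearMap.toSpanSingleton ℂ (V k p nn mm) (c k p nn mm a b)))) u v

/-- Parity of the basis indices. -/
def par (k p : ℕ) (nn mm : ℕ → ℕ) : Idx k p nn mm → ZMod 2 :=
  Sum.elim (fun _ => 0) (fun _ => 1)

/-- `u` is homogeneous of degree `s`. -/
def IsHomog (k p : ℕ) (nn mm : ℕ → ℕ) (u : V k p nn mm) (s : ZMod 2) : Prop :=
  ∀ a ∈ u.support, par k p nn mm a = s


/-!
Odd basis vectors bracket nontrivially only with `x₁`, so `[y, w]` and `[w, y]` see only the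
`x₁`-coefficient of `w`. For `[x₁, y_s] = y_{s+1}`, applying `D` to `[y_s, y_s] = 0` gives
`0 = [D y_s, y_s] - [y_s, D y_s] = 2 α y_{s+1}`, where `α` is the `x₁`-coefficient of `D y_s`.
Since `D x₁` is odd, `D y_{s+1} = D [x₁, y_s] = [x₁, D y_s]`, which has no `x₁`-component either.
As every block of odd vectors has length at least two, these cases cover every `y_s`, so `D`
never produces `x₁`; then `[u, D v] = 0` for odd `u` and the sign in the super Leibniz rule
becomes irrelevant.
-/

lemma P_mono (f : ℕ → ℕ) : Monotone (P f) := fun _ _ h =>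
  Finset.sum_le_sum_of_subset (Finset.range_subset_range.2 h)

lemma P_succ (f : ℕ → ℕ) (j : ℕ) : P f (j + 1) = P f j + f j :=
  Finset.sum_range_succ _ _

lemma exists_lt_P_of_le_P (f : ℕ → ℕ) {q i : ℕ} (hi : 0 < i) (hiq : i ≤ P f q) :
    ∃ j < q, P f j < i ∧ i ≤ P f (j + 1) := by
  induction q with
  | zero => exact absurd hiq (by simp [P]; omega)
  | succ q ih =>
    by_cases h : i ≤ P f q
    · obtain ⟨j, hj, hji⟩ := ih h
      exact ⟨j, by omega, hji⟩
    · exact ⟨q, by omega, by omega, hiq⟩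

section Blocks

variable {p : ℕ} {mm : ℕ → ℕ}

lemma OdOK.lt {s : ℕ} (h : OdOK p mm (s + 1)) : s + 1 < MM p mm := by
  obtain ⟨j, hj, -, hs⟩ := h
  have := P_mono mm (show j + 1 ≤ p by omega)
  show s + 1 < P mm p
  omega

lemma odOK_start (hmm : ∀ j < p, 2 ≤ mm j) {j : ℕ} (hj : j < p) : OdOK p mm (P mm j + 1) :=
  ⟨j, hj, le_rfl, by rw [P_succ]; linarith [hmm j hj]⟩

lemma odOK_of_not_start {s : ℕ} (hs : s + 2 ≤ MM p mm)
    (hstart : ¬ ∃ j < p, s + 2 = P mm j + 1) : OdOK p mm (s + 1) := by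
  obtain ⟨j, hj, hlt, hle⟩ := exists_lt_P_of_le_P mm (by omega) hs
  have hne : s + 2 ≠ P mm j + 1 := fun h => hstart ⟨j, hj, h⟩
  exact ⟨j, hj, by omega, hle⟩

lemma odOK_or_odOK_pred (hmm : ∀ j < p, 2 ≤ mm j) {u : ℕ} (hu : u < MM p mm) :
    OdOK p mm (u + 1) ∨ ∃ s, u = s + 1 ∧ OdOK p mm (s + 1) := by
  obtain ⟨j, hj, hlt, hle⟩ := exists_lt_P_of_le_P mm (Nat.succ_pos u) hu
  by_cases hlast : u + 1 = P mm (j + 1)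
  · have hmmj := hmm j hj
    rw [P_succ] at hlast
    exact Or.inr ⟨u - 1, by omega, j, hj, by omega, by rw [P_succ]; omega⟩
  · exact Or.inl ⟨j, hj, by omega, by omega⟩

end Blocks

section Bracket

variable {k p : ℕ} {nn mm : ℕ → ℕ}

abbrev x₁ (k p : ℕ) (nn mm : ℕ → ℕ) : Idx k p nn mm := Sum.inl ⟨0, Nat.succ_pos _⟩

lemma X_succ_eq_single {s : ℕ} (hs : s < NN k nn) :
    X k p nn mm (s + 1) = Finsupp.single (Sum.inl ⟨s, hs⟩) 1 := by
  rw [X, dif_pos ⟨by omega, hs⟩]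
  rfl

lemma Y_succ_eq_single {s : ℕ} (hs : s < MM p mm) :
    Y k p nn mm (s + 1) = Finsupp.single (Sum.inr ⟨s, hs⟩) 1 := by
  rw [Y, dif_pos ⟨by omega, hs⟩]
  rfl

lemma isHomog_single (a : Idx k p nn mm) (r : ℂ) :
    IsHomog k p nn mm (Finsupp.single a r) (par k p nn mm a) := fun _ hb => by
  rw [Finset.mem_singleton.1 (Finsupp.support_single_subset hb)]

lemma isHomog_zero (s : ZMod 2) : IsHomog k p nn mm 0 s := by
  simp [IsHomog]

lemma isHomog_X (s : ℕ) : IsHomog k p nn mm (X k p nn mm s) 0 := by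
  unfold X
  split
  · exact isHomog_single _ _
  · exact isHomog_zero _

lemma isHomog_Y (s : ℕ) : IsHomog k p nn mm (Y k p nn mm s) 1 := by
  unfold Y
  split
  · exact isHomog_single _ _
  · exact isHomog_zero _

lemma IsHomog.apply_x₁ {u : V k p nn mm} (hu : IsHomog k p nn mm u 1) :
    u (x₁ k p nn mm) = 0 :=
  Finsupp.notMem_support_iff.1 fun h => zero_ne_one (hu _ h)

lemma br_eq_sum (u v : V k p nn mm) :
    br k p nn mm u v = u.sum fun a r => v.sum fun b s => (r * s) • c k p nn mm a b := by
  simp [br, Finsupp.lsum_apply, Finsupp.sum, Finset.smul_sum, mul_smul]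

lemma br_zero_left (v : V k p nn mm) : br k p nn mm 0 v = 0 := by
  simp [br_eq_sum]

lemma br_add_left (u₁ u₂ v : V k p nn mm) :
    br k p nn mm (u₁ + u₂) v = br k p nn mm u₁ v + br k p nn mm u₂ v := by
  simp only [br, map_add, LinearMap.add_apply]

lemma br_single_left (a : Idx k p nn mm) (r : ℂ) (w : V k p nn mm) :
    br k p nn mm (Finsupp.single a r) w = w.sum fun b s => (r * s) • c k p nn mm a b := by
  rw [br_eq_sum, Finsupp.sum_single_index (by simp)]

lemma br_single_right (b : Idx k p nn mm) (s : ℂ) (w : V k p nn mm) :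
    br k p nn mm w (Finsupp.single b s) = w.sum fun a r => (r * s) • c k p nn mm a b := by
  rw [br_eq_sum]
  exact Finsupp.sum_congr fun a _ => Finsupp.sum_single_index (by simp)

lemma c_inr_left_eq_zero (s : Fin (MM p mm)) {b : Idx k p nn mm} (hb : b ≠ x₁ k p nn mm) :
    c k p nn mm (Sum.inr s) b = 0 := by
  rcases b with t | t
  · exact if_neg fun h => hb (congrArg Sum.inl (Fin.ext h.1))
  · rfl

lemma c_inr_right_eq_zero (s : Fin (MM p mm)) {a : Idx k p nn mm} (ha : a ≠ x₁ k p nn mm) :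
    c k p nn mm a (Sum.inr s) = 0 := by
  rcases a with t | t
  · exact if_neg fun h => ha (congrArg Sum.inl (Fin.ext h.1))
  · rfl

lemma br_single_inr_left (s : Fin (MM p mm)) (r : ℂ) (w : V k p nn mm) :
    br k p nn mm (Finsupp.single (Sum.inr s) r) w =
      (r * w (x₁ k p nn mm)) • c k p nn mm (Sum.inr s) (x₁ k p nn mm) := by
  rw [br_single_left]
  exact Finsupp.sum_eq_single _ (fun b _ hb => by rw [c_inr_left_eq_zero s hb, smul_zero])
    (by simp)

lemma br_single_inr_right (s : Fin (MM p mm)) (r : ℂ) (w : V k p nn mm) :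
    br k p nn mm w (Finsupp.single (Sum.inr s) r) =
      (w (x₁ k p nn mm) * r) • c k p nn mm (x₁ k p nn mm) (Sum.inr s) := by
  rw [br_single_right]
  exact Finsupp.sum_eq_single _ (fun a _ ha => by rw [c_inr_right_eq_zero s ha, smul_zero])
    (by simp)

lemma br_eq_zero_of_isHomog_one_left {u w : V k p nn mm} (hu : IsHomog k p nn mm u 1)
    (hw : w (x₁ k p nn mm) = 0) : br k p nn mm u w = 0 := by
  rw [br_eq_sum]
  refine Finset.sum_eq_zero fun a ha => ?_
  obtain ⟨s, rfl⟩ : ∃ s, a = Sum.inr s := by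
    rcases a with t | s
    · exact absurd (hu _ ha) zero_ne_one
    · exact ⟨s, rfl⟩
  dsimp only
  rw [← br_single_left, br_single_inr_left, hw, mul_zero, zero_smul]

lemma br_eq_zero_of_isHomog_one_right {u w : V k p nn mm} (hu : IsHomog k p nn mm u 1)
    (hw : w (x₁ k p nn mm) = 0) : br k p nn mm w u = 0 := by
  rw [br_eq_sum]
  refine Finset.sum_eq_zero fun a _ => Finset.sum_eq_zero fun b hb => ?_
  obtain ⟨s, rfl⟩ : ∃ s, b = Sum.inr s := by
    rcases b with t | s
    · exact absurd (hu _ hb) zero_ne_one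
    · exact ⟨s, rfl⟩
  dsimp only
  by_cases ha : a = x₁ k p nn mm
  · rw [ha, hw, zero_mul, zero_smul]
  · rw [c_inr_right_eq_zero s ha, smul_zero]

lemma c_x₁_inr {s : ℕ} (hs : s + 1 < MM p mm) (h : OdOK p mm (s + 1)) :
    c k p nn mm (x₁ k p nn mm) (Sum.inr ⟨s, by omega⟩) = Y k p nn mm (s + 2) :=
  if_pos ⟨rfl, h⟩

lemma c_inr_x₁ {s : ℕ} (hs : s + 1 < MM p mm) (h : OdOK p mm (s + 1)) :
    c k p nn mm (Sum.inr ⟨s, by omega⟩) (x₁ k p nn mm) = -Y k p nn mm (s + 2) :=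
  if_pos ⟨rfl, h⟩

lemma br_X_one_Y {s : ℕ} (h : OdOK p mm (s + 1)) :
    br k p nn mm (X k p nn mm 1) (Y k p nn mm (s + 1)) = Y k p nn mm (s + 2) := by
  rw [Y_succ_eq_single (by have := h.lt; omega), br_single_inr_right,
    X_succ_eq_single (Nat.succ_pos _), c_x₁_inr h.lt h]
  simp [x₁]

lemma br_sub_br_Y {s : ℕ} (h : OdOK p mm (s + 1)) (w : V k p nn mm) :
    br k p nn mm w (Y k p nn mm (s + 1)) - br k p nn mm (Y k p nn mm (s + 1)) w =
      (2 * w (x₁ k p nn mm)) • Y k p nn mm (s + 2) := by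
  rw [Y_succ_eq_single (by have := h.lt; omega), br_single_inr_right, br_single_inr_left,
    c_x₁_inr h.lt h, c_inr_x₁ h.lt h]
  module

def evenNonGenerators (k p : ℕ) (nn mm : ℕ → ℕ) : Set (V k p nn mm) :=
  {v | ∃ s : ℕ, 1 ≤ s ∧ s ≤ NN k nn ∧ s ≠ 1 ∧ (∀ j < k, s ≠ P nn j + 2) ∧
    v = X k p nn mm s}

lemma X_succ_mem_evenNonGenerators {s : ℕ} (h : EvOK k nn s) :
    X k p nn mm (s + 1) ∈ evenNonGenerators k p nn mm := by
  obtain ⟨j, hj, hjs, hsj⟩ := h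
  refine ⟨s + 1, by omega, ?_, by omega, fun i _ hi => ?_, rfl⟩
  · have := P_mono nn (show j + 1 ≤ k by omega)
    show s + 1 ≤ P nn k + 1
    omega
  · rcases le_or_gt i j with hij | hij
    · have := P_mono nn hij
      omega
    · have := P_mono nn (show j + 1 ≤ i by omega)
      omega

lemma apply_x₁_eq_zero_of_mem_span {v : V k p nn mm}
    (hv : v ∈ Submodule.span ℂ (evenNonGenerators k p nn mm)) : v (x₁ k p nn mm) = 0 := by
  suffices Submodule.span ℂ (evenNonGenerators k p nn mm) ≤
      LinearMap.ker (Finsupp.lapply (x₁ k p nn mm)) from this hv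
  rw [Submodule.span_le]
  rintro _ ⟨s, hs1, hsN, hs, -, rfl⟩
  obtain ⟨t, rfl⟩ : ∃ t, s = t + 1 := ⟨s - 1, by omega⟩
  rw [SetLike.mem_coe, LinearMap.mem_ker, Finsupp.lapply_apply, X_succ_eq_single (by omega),
    Finsupp.single_eq_of_ne (by simp; omega)]

lemma c_x₁_inl_mem_span (t : Fin (NN k nn)) :
    c k p nn mm (x₁ k p nn mm) (Sum.inl t) ∈ Submodule.span ℂ (evenNonGenerators k p nn mm) := by
  by_cases h : EvOK k nn (t.val + 1)
  · rw [show c k p nn mm (x₁ k p nn mm) (Sum.inl t) = X k p nn mm (t.val + 2) from if_pos ⟨rfl, h⟩]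
    exact Submodule.subset_span (X_succ_mem_evenNonGenerators h)
  · have hEv1 : ¬ EvOK k nn 1 := fun ⟨_, _, h1, _⟩ => by omega
    rw [show c k p nn mm (x₁ k p nn mm) (Sum.inl t) = 0 from
      (if_neg fun h' => h h'.2).trans (if_neg fun h' => hEv1 h'.2)]
    exact Submodule.zero_mem _

lemma br_X_one_mem_span {w : V k p nn mm} (hw : IsHomog k p nn mm w 0) :
    br k p nn mm (X k p nn mm 1) w ∈ Submodule.span ℂ (evenNonGenerators k p nn mm) := by
  rw [X_succ_eq_single (Nat.succ_pos _), br_single_left]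
  refine Submodule.sum_mem _ fun b hb => Submodule.smul_mem _ _ ?_
  rcases b with t | t
  · exact c_x₁_inl_mem_span t
  · exact absurd (hw _ hb) one_ne_zero

end Bracket

section Superderivation

variable {k p : ℕ} {nn mm : ℕ → ℕ}

structure IsOddSuperderivation (k p : ℕ) (nn mm : ℕ → ℕ) (D : Module.End ℂ (V k p nn mm)) :
    Prop where
  isHomog_map : ∀ (u : V k p nn mm) (s : ZMod 2),
    IsHomog k p nn mm u s → IsHomog k p nn mm (D u) (s + 1)
  map_br : ∀ (u v : V k p nn mm) (su : ZMod 2), IsHomog k p nn mm u su →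
    D (br k p nn mm u v) = br k p nn mm (D u) v + ((-1 : ℂ) ^ su.val) • br k p nn mm u (D v)

namespace IsOddSuperderivation

variable {D : Module.End ℂ (V k p nn mm)} (hD : IsOddSuperderivation k p nn mm D)
include hD

lemma isHomog_map_even {u : V k p nn mm} (hu : IsHomog k p nn mm u 0) :
    IsHomog k p nn mm (D u) 1 := by
  simpa using hD.isHomog_map u 0 hu

lemma isHomog_map_odd {u : V k p nn mm} (hu : IsHomog k p nn mm u 1) :
    IsHomog k p nn mm (D u) 0 := by
  simpa [show (1 : ZMod 2) + 1 = 0 from rfl] using hD.isHomog_map u 1 hu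

lemma map_br_even {u : V k p nn mm} (hu : IsHomog k p nn mm u 0) (v : V k p nn mm) :
    D (br k p nn mm u v) = br k p nn mm (D u) v + br k p nn mm u (D v) := by
  simpa using hD.map_br u v 0 hu

lemma map_br_odd {u : V k p nn mm} (hu : IsHomog k p nn mm u 1) (v : V k p nn mm) :
    D (br k p nn mm u v) = br k p nn mm (D u) v - br k p nn mm u (D v) := by
  simpa [sub_eq_add_neg, show (1 : ZMod 2).val = 1 from rfl] using hD.map_br u v 1 hu

lemma br_map_Y_sub_br_Y (s : ℕ) :
    br k p nn mm (D (Y k p nn mm s)) (Y k p nn mm s) -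
      br k p nn mm (Y k p nn mm s) (D (Y k p nn mm s)) = 0 := by
  rw [← hD.map_br_odd (isHomog_Y s), br_eq_zero_of_isHomog_one_left (isHomog_Y s)
    (isHomog_Y s).apply_x₁, map_zero]

lemma map_Y_apply_x₁ {s : ℕ} (h : OdOK p mm (s + 1)) :
    D (Y k p nn mm (s + 1)) (x₁ k p nn mm) = 0 := by
  have h2 := (br_sub_br_Y h _).symm.trans (hD.br_map_Y_sub_br_Y (s + 1))
  rw [Y_succ_eq_single h.lt, smul_eq_zero, Finsupp.single_eq_zero] at h2
  simpa using h2

lemma map_Y_succ {s : ℕ} (h : OdOK p mm (s + 1)) :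
    D (Y k p nn mm (s + 2)) = br k p nn mm (X k p nn mm 1) (D (Y k p nn mm (s + 1))) := by
  rw [← br_X_one_Y h, hD.map_br_even (isHomog_X 1),
    br_eq_zero_of_isHomog_one_right (isHomog_Y _) (hD.isHomog_map_even (isHomog_X 1)).apply_x₁,
    zero_add]

lemma map_Y_succ_mem_span {s : ℕ} (h : OdOK p mm (s + 1)) :
    D (Y k p nn mm (s + 2)) ∈ Submodule.span ℂ (evenNonGenerators k p nn mm) := by
  rw [hD.map_Y_succ h]
  exact br_X_one_mem_span (hD.isHomog_map_odd (isHomog_Y _))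

lemma map_apply_x₁ (hmm : ∀ j < p, 2 ≤ mm j) (v : V k p nn mm) : D v (x₁ k p nn mm) = 0 := by
  induction v using Finsupp.induction_linear with
  | zero => simp
  | add v w hv hw => simp [hv, hw]
  | single a r =>
    rcases a with t | t
    · exact (hD.isHomog_map_even (isHomog_single (Sum.inl t) r)).apply_x₁
    · rw [show Finsupp.single (Sum.inr t) r = r • Y k p nn mm (t.val + 1) by
        rw [Y_succ_eq_single t.isLt, Finsupp.smul_single_one], map_smul, Finsupp.smul_apply]
      rcases odOK_or_odOK_pred hmm t.isLt with h | ⟨s, hs, h⟩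
      · rw [hD.map_Y_apply_x₁ h, smul_zero]
      · rw [hs, apply_x₁_eq_zero_of_mem_span (hD.map_Y_succ_mem_span h), smul_zero]

lemma map_br_of_forall_apply_x₁ (hx₁ : ∀ v, D v (x₁ k p nn mm) = 0) (u v : V k p nn mm) :
    D (br k p nn mm u v) = br k p nn mm (D u) v + br k p nn mm u (D v) := by
  induction u using Finsupp.induction_linear with
  | zero => simp [br_zero_left]
  | add u w hu hw =>
    rw [br_add_left, map_add, hu, hw, map_add, br_add_left, br_add_left]
    abel
  | single a r =>
    rcases a with t | t
    · exact hD.map_br_even (isHomog_single (Sum.inl t) r) v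
    · have hodd := isHomog_single (k := k) (nn := nn) (Sum.inr t) r
      rw [hD.map_br_odd hodd, br_eq_zero_of_isHomog_one_left hodd (hx₁ v), sub_zero, add_zero]

end IsOddSuperderivation

end Superderivation

theorem oddSuperderivations_N_general (k p : ℕ) (nn mm : ℕ → ℕ)
    (hmm : ∀ j < p, 2 ≤ mm j)
    (D : Module.End ℂ (V k p nn mm))
    (hpar : ∀ (u : V k p nn mm) (s : ZMod 2),
      IsHomog k p nn mm u s → IsHomog k p nn mm (D u) (s + 1))
    (hder : ∀ (u v : V k p nn mm) (su : ZMod 2), IsHomog k p nn mm u su →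
      D (br k p nn mm u v) =
        br k p nn mm (D u) v + ((-1 : ℂ) ^ su.val) • br k p nn mm u (D v)) :
    (∀ j < p,
      br k p nn mm (D (Y k p nn mm (P mm j + 1))) (Y k p nn mm (P mm j + 1)) -
        br k p nn mm (Y k p nn mm (P mm j + 1)) (D (Y k p nn mm (P mm j + 1))) = 0 ∧
      (D (Y k p nn mm (P mm j + 1))) (Sum.inl ⟨0, Nat.succ_pos _⟩) = 0) ∧
    (∀ i : ℕ, 2 ≤ i → i ≤ MM p mm → (¬ ∃ j < p, i = P mm j + 1) →
      D (Y k p nn mm i) = br k p nn mm (X k p nn mm 1) (D (Y k p nn mm (i - 1))) ∧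
      D (Y k p nn mm i) ∈ Submodule.span ℂ
        {v | ∃ s : ℕ, 1 ≤ s ∧ s ≤ NN k nn ∧ s ≠ 1 ∧ (∀ j < k, s ≠ P nn j + 2) ∧
          v = X k p nn mm s}) ∧
    (∀ u v : V k p nn mm,
      D (br k p nn mm u v) = br k p nn mm (D u) v + br k p nn mm u (D v)) := by
  have hD : IsOddSuperderivation k p nn mm D := ⟨hpar, hder⟩
  refine ⟨fun j hj => ⟨hD.br_map_Y_sub_br_Y _, hD.map_Y_apply_x₁ (odOK_start hmm hj)⟩,
    fun i hi hiM hstart => ?_, hD.map_br_of_forall_apply_x₁ (hD.map_apply_x₁ hmm)⟩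
  obtain ⟨s, rfl⟩ : ∃ s, i = s + 2 := ⟨i - 2, by omega⟩
  have hs := odOK_of_not_start hiM hstart
  exact ⟨hD.map_Y_succ hs, hD.map_Y_succ_mem_span hs⟩

/-- Every odd superderivation `D` of `N(n_1,…,n_k,1 | m_1,…,m_p)`: for each odd
generator `y_i` (`i = m_1+…+m_j+1`) one has `[D(y_i),y_i] - [y_i,D(y_i)] = 0` and the
`x_1`-coefficient of `D(y_i)` vanishes; for each non-generator index `i ≥ 2`,
`D(y_i) = [x_1, D(y_{i-1})]` lies in the span of the non-generator even basis vectors.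
Consequently `D` is a derivation of `N` regarded as a ℤ₂-graded Lie algebra. -/
theorem oddSuperderivations_N (k p : ℕ) (nn mm : ℕ → ℕ)
    (hnn : ∀ j < k, 1 ≤ nn j) (hmm : ∀ j < p, 2 ≤ mm j)
    (D : Module.End ℂ (V k p nn mm))
    (hpar : ∀ (u : V k p nn mm) (s : ZMod 2),
      IsHomog k p nn mm u s → IsHomog k p nn mm (D u) (s + 1))
    (hder : ∀ (u v : V k p nn mm) (su : ZMod 2), IsHomog k p nn mm u su →
      D (br k p nn mm u v) =
        br k p nn mm (D u) v + ((-1 : ℂ) ^ su.val) • br k p nn mm u (D v)) :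
    (∀ j < p,
      br k p nn mm (D (Y k p nn mm (P mm j + 1))) (Y k p nn mm (P mm j + 1)) -
        br k p nn mm (Y k p nn mm (P mm j + 1)) (D (Y k p nn mm (P mm j + 1))) = 0 ∧
      (D (Y k p nn mm (P mm j + 1))) (Sum.inl ⟨0, Nat.succ_pos _⟩) = 0) ∧
    (∀ i : ℕ, 2 ≤ i → i ≤ MM p mm → (¬ ∃ j < p, i = P mm j + 1) →
      D (Y k p nn mm i) = br k p nn mm (X k p nn mm 1) (D (Y k p nn mm (i - 1))) ∧
      D (Y k p nn mm i) ∈ Submodule.span ℂ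
        {v | ∃ s : ℕ, 1 ≤ s ∧ s ≤ NN k nn ∧ s ≠ 1 ∧ (∀ j < k, s ≠ P nn j + 2) ∧
          v = X k p nn mm s}) ∧
    (∀ u v : V k p nn mm,
      D (br k p nn mm u v) = br k p nn mm (D u) v + br k p nn mm u (D v)) :=
  oddSuperderivations_N_general k p nn mm hmm D hpar hder

end ModelNilpotent
end
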